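/- arXiv:math-ph/0007006 — 2 statements merged into one kernel-verified Lean document; each statement's English description precedes it below -/
import Mathlib

section
/- Let p(x,y) be a polynomial in two real variables such that for every y ∈ ℝ the integral over x ∈ ℝ of p(x,y)·|u(x+iy)|² dx equals 0. Then the polynomial q(x,y) := ∂²p/∂x²(x,y) + ∂²p/∂y²(x,y) + 12x²y·p(x,y) + 4·(x³ − 3xy² − β)·∫₀ˣ (∂p/∂y)(t,y) dt also satisfies: for every y ∈ ℝ, the integral over x ∈ ℝ of q(x,y)·|u(x+iy)|² dx equals 0. -/
/-!
On the line `Im z = y` write `h = |u|²`, `g = Im (u' ū)` and `k = |u'|²`. The equation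
`u'' = (iz³ - λ) u` gives `∂_y h = -2g`, `∂_y g = (y³ - 3x²y - α) h - k`,
`∂_x g = (x³ - 3xy² - β) h` and `∂_x² h = 2 (y³ - 3x²y - α) h + 2k`. Differentiating
`∫ p h dx = 0` twice in `y`, which the horizontal decay of `u` justifies because it beats every
polynomial, gives `∫ (p_yy h - 4 p_y g - 2 (y³ - 3x²y - α) p h + 2 p k) dx = 0`. The integrals
over `ℝ` of `∂_x ((∫₀ˣ p_y) g)` and of `∂_x (p ∂_x h - p_x h)` vanish too, and they express
`∫ p_y g` and `∫ p k` through integrals against `h` alone. Adding up and using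
`∫ (y³ - α) p h = 0` leaves `∫ q h = 0`.
-/

open Complex Real ComplexConjugate MeasureTheory

open Filter Set

theorem integrable_of_integrableOn_Ioi_comp_abs {E : Type*} [NormedAddCommGroup E] {f : ℝ → E}
    (hf : IntegrableOn (fun x => f |x|) (Ioi 0)) : Integrable fun x => f |x| := by
  have hneg : MeasurableEmbedding fun x : ℝ => -x := (Homeomorph.neg ℝ).measurableEmbedding
  have hIic : IntegrableOn (fun x => f |x|) (Iic 0) := by
    rw [← Measure.map_neg_eq_self (volume : Measure ℝ), hneg.integrableOn_map_iff]
    simp_rw [Function.comp_def, abs_neg, neg_preimage, neg_Iic, neg_zero]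
    exact Iff.mpr integrableOn_Ici_iff_integrableOn_Ioi hf
  rw [← integrableOn_univ, ← Iic_union_Ioi (a := (0 : ℝ))]
  exact hIic.union hf

theorem integrable_one_add_abs_pow_mul_exp_neg_abs_rpow (N : ℕ) {c : ℝ} (hc : 0 < c) :
    Integrable fun x : ℝ => (1 + |x|) ^ N * exp (-|x| ^ c) := by
  refine integrable_of_integrableOn_Ioi_comp_abs (f := fun t => (1 + t) ^ N * exp (-t ^ c)) ?_
  have hmon : ∀ k : ℕ, IntegrableOn (fun t : ℝ => t ^ k * exp (-t ^ c)) (Ioi 0) := fun k => by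
    simpa using integrableOn_rpow_mul_exp_neg_rpow (s := k)
      (by linarith [k.cast_nonneg (α := ℝ)]) hc
  have hsum : IntegrableOn (fun t : ℝ =>
      ∑ k ∈ Finset.range (N + 1), (N.choose k : ℝ) * (t ^ k * exp (-t ^ c))) (Ioi 0) :=
    integrable_finsetSum _ fun k _ => (hmon k).const_mul _
  refine hsum.congr_fun (fun t ht => ?_) measurableSet_Ioi
  simp only [abs_of_pos (mem_Ioi.mp ht), add_comm 1 t, add_pow, one_pow, mul_one,
    Finset.sum_mul]
  exact Finset.sum_congr rfl fun k _ => by ring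

def PolyGrowth (r : ℝ → ℝ → ℝ) : Prop :=
  (∀ y, Continuous fun x => r x y) ∧
    ∀ M, ∃ A : ℝ, ∃ N : ℕ, 0 ≤ A ∧ ∀ x y, |y| ≤ M → |r x y| ≤ A * (1 + |x|) ^ N

namespace PolyGrowth

variable {r s : ℝ → ℝ → ℝ}

theorem const (c : ℝ) : PolyGrowth fun _ _ => c :=
  ⟨fun _ => continuous_const, fun _ => ⟨|c|, 0, abs_nonneg c, fun _ _ _ => by simp⟩⟩

theorem fst : PolyGrowth fun x _ => x :=
  ⟨fun _ => continuous_id, fun _ => ⟨1, 1, zero_le_one, fun x _ _ => by simp⟩⟩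

theorem snd : PolyGrowth fun _ y => y :=
  ⟨fun _ => continuous_const, fun M => ⟨max M 0, 0, le_max_right _ _, fun _ _ hy => by
    simpa only [pow_zero, mul_one] using hy.trans (le_max_left _ _)⟩⟩

theorem add (hr : PolyGrowth r) (hs : PolyGrowth s) : PolyGrowth fun x y => r x y + s x y := by
  refine ⟨fun y => (hr.1 y).add (hs.1 y), fun M => ?_⟩
  obtain ⟨A, N, hA, hrb⟩ := hr.2 M
  obtain ⟨B, K, hB, hsb⟩ := hs.2 M
  refine ⟨A + B, max N K, add_nonneg hA hB, fun x y hy => ?_⟩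
  have h1 : (1 : ℝ) ≤ 1 + |x| := le_add_of_nonneg_right (abs_nonneg x)
  calc |r x y + s x y| ≤ A * (1 + |x|) ^ N + B * (1 + |x|) ^ K :=
        (abs_add_le _ _).trans (add_le_add (hrb x y hy) (hsb x y hy))
    _ ≤ A * (1 + |x|) ^ max N K + B * (1 + |x|) ^ max N K := by
        gcongr <;> first | exact h1 | omega
    _ = (A + B) * (1 + |x|) ^ max N K := by ring

theorem mul (hr : PolyGrowth r) (hs : PolyGrowth s) : PolyGrowth fun x y => r x y * s x y := by
  refine ⟨fun y => (hr.1 y).mul (hs.1 y), fun M => ?_⟩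
  obtain ⟨A, N, hA, hrb⟩ := hr.2 M
  obtain ⟨B, K, hB, hsb⟩ := hs.2 M
  refine ⟨A * B, N + K, mul_nonneg hA hB, fun x y hy => ?_⟩
  rw [abs_mul, pow_add, mul_mul_mul_comm]
  exact mul_le_mul (hrb x y hy) (hsb x y hy) (abs_nonneg _) (by positivity)

theorem primitive (hr : PolyGrowth r) :
    PolyGrowth fun x y => ∫ t in (0 : ℝ)..x, r t y := by
  refine ⟨fun y => intervalIntegral.continuous_primitive
    (fun a b => ((hr.1 y).intervalIntegrable a b)) 0, fun M => ?_⟩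
  obtain ⟨A, N, hA, hrb⟩ := hr.2 M
  refine ⟨A, N + 1, hA, fun x y hy => ?_⟩
  have hle : ∀ t ∈ uIoc (0 : ℝ) x, ‖r t y‖ ≤ A * (1 + |x|) ^ N := fun t ht => by
    have ht' : |t| ≤ |x| := by
      rcases le_total 0 x with h | h
      · rw [uIoc_of_le h] at ht
        rw [abs_of_pos ht.1, abs_of_nonneg h]; exact ht.2
      · rw [uIoc_of_ge h] at ht
        rw [abs_of_nonpos ht.2, abs_of_nonpos h]; linarith [ht.1]
    exact (hrb t y hy).trans (by gcongr)
  calc |∫ t in (0 : ℝ)..x, r t y| ≤ A * (1 + |x|) ^ N * |x - 0| :=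
        intervalIntegral.norm_integral_le_of_norm_le_const hle
    _ ≤ A * (1 + |x|) ^ N * (1 + |x|) := by gcongr; simp
    _ = A * (1 + |x|) ^ (N + 1) := by ring

end PolyGrowth

theorem MvPolynomial.hasDerivAt_eval_update {𝕜 σ : Type*} [NontriviallyNormedField 𝕜]
    [DecidableEq σ] (P : MvPolynomial σ 𝕜) (v : σ → 𝕜) (i : σ) (t : 𝕜) :
    HasDerivAt (fun s => eval (Function.update v i s) P)
      (eval (Function.update v i t) (pderiv i P)) t := by
  induction P using MvPolynomial.induction_on with
  | C a => simpa using hasDerivAt_const t a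
  | add p q hp hq => simpa using hp.fun_add hq
  | mul_X p n hp =>
    have hn := hasDerivAt_pi.1 (hasDerivAt_update v i t) n
    simp only [map_mul, eval_X, pderiv_mul, pderiv_X]
    refine (hp.fun_mul hn).congr_deriv ?_
    by_cases h : i = n
    · subst h; simp
    · simp [Pi.single_eq_of_ne' h]

namespace MvPolynomial

variable (P : MvPolynomial (Fin 2) ℝ)

theorem hasDerivAt_eval_fst (x y : ℝ) :
    HasDerivAt (fun s => eval ![s, y] P) (eval ![x, y] (pderiv 0 P)) x := by
  have h : ∀ s : ℝ, ![s, y] = Function.update ![0, y] 0 s := fun s => by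
    ext i; fin_cases i <;> rfl
  simpa only [← h] using hasDerivAt_eval_update P ![0, y] 0 x

theorem hasDerivAt_eval_snd (x y : ℝ) :
    HasDerivAt (fun s => eval ![x, s] P) (eval ![x, y] (pderiv 1 P)) y := by
  have h : ∀ s : ℝ, ![x, s] = Function.update ![x, 0] 1 s := fun s => by
    ext i; fin_cases i <;> rfl
  simpa only [← h] using hasDerivAt_eval_update P ![x, 0] 1 y

theorem deriv_eval_fst (y : ℝ) :
    deriv (fun s => eval ![s, y] P) = fun x => eval ![x, y] (pderiv 0 P) :=
  _root_.funext fun x => (hasDerivAt_eval_fst P x y).deriv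

theorem deriv_eval_snd (x : ℝ) :
    deriv (fun s => eval ![x, s] P) = fun y => eval ![x, y] (pderiv 1 P) :=
  _root_.funext fun y => (hasDerivAt_eval_snd P x y).deriv

end MvPolynomial

theorem MvPolynomial.polyGrowth_eval (P : MvPolynomial (Fin 2) ℝ) :
    PolyGrowth fun x y => eval ![x, y] P := by
  induction P using MvPolynomial.induction_on with
  | C a => simpa using PolyGrowth.const a
  | add p q hp hq => simpa using hp.add hq
  | mul_X p n hp =>
    fin_cases n
    · simpa using hp.mul PolyGrowth.fst
    · simpa using hp.mul PolyGrowth.snd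

theorem polyGrowth_re_I_mul_cube_sub (c : ℝ) :
    PolyGrowth fun x y => y ^ 3 - 3 * x ^ 2 * y - c := by
  have h : (fun x y : ℝ => y ^ 3 - 3 * x ^ 2 * y - c) = fun x y =>
      MvPolynomial.eval ![x, y] (.X 1 ^ 3 - 3 * .X 0 ^ 2 * .X 1 - .C c) := by simp
  exact h ▸ MvPolynomial.polyGrowth_eval _

theorem polyGrowth_im_I_mul_cube_sub (c : ℝ) :
    PolyGrowth fun x y => x ^ 3 - 3 * x * y ^ 2 - c := by
  have h : (fun x y : ℝ => x ^ 3 - 3 * x * y ^ 2 - c) = fun x y =>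
      MvPolynomial.eval ![x, y] (.X 0 ^ 3 - 3 * .X 0 * .X 1 ^ 2 - .C c) := by simp
  exact h ▸ MvPolynomial.polyGrowth_eval _

def RapidDecay (θ : ℝ → ℝ → ℝ) : Prop :=
  (∀ y, Continuous fun x => θ x y) ∧
    ∀ M, ∃ C c : ℝ, 0 < c ∧ ∀ x y, |y| ≤ M → |θ x y| ≤ C * exp (-|x| ^ c)

theorem RapidDecay.of_abs_le {θ θ' : ℝ → ℝ → ℝ} (hθ : RapidDecay θ)
    (hc : ∀ y, Continuous fun x => θ' x y) (hle : ∀ x y, |θ' x y| ≤ θ x y) :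
    RapidDecay θ' :=
  ⟨hc, fun M => (hθ.2 M).imp fun _ ⟨c, hc, hb⟩ =>
    ⟨c, hc, fun x y hy => (hle x y).trans ((le_abs_self _).trans (hb x y hy))⟩⟩

def LocallyDominated (F : ℝ → ℝ → ℝ) : Prop :=
  (∀ y, Continuous fun x => F x y) ∧
    ∀ M, ∃ b : ℝ → ℝ, Integrable b ∧ ∀ x y, |y| ≤ M → |F x y| ≤ b x

namespace LocallyDominated

variable {F G : ℝ → ℝ → ℝ}

theorem integrable (hF : LocallyDominated F) (y : ℝ) : Integrable fun x => F x y := by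
  obtain ⟨b, hb, hFb⟩ := hF.2 |y|
  exact hb.mono' (hF.1 y).aestronglyMeasurable (Eventually.of_forall fun x => hFb x y le_rfl)

theorem add (hF : LocallyDominated F) (hG : LocallyDominated G) :
    LocallyDominated fun x y => F x y + G x y := by
  refine ⟨fun y => (hF.1 y).add (hG.1 y), fun M => ?_⟩
  obtain ⟨b, hb, hFb⟩ := hF.2 M
  obtain ⟨b', hb', hGb⟩ := hG.2 M
  exact ⟨fun x => b x + b' x, hb.add hb', fun x y hy =>
    (abs_add_le _ _).trans (add_le_add (hFb x y hy) (hGb x y hy))⟩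

theorem sub (hF : LocallyDominated F) (hG : LocallyDominated G) :
    LocallyDominated fun x y => F x y - G x y := by
  refine ⟨fun y => (hF.1 y).sub (hG.1 y), fun M => ?_⟩
  obtain ⟨b, hb, hFb⟩ := hF.2 M
  obtain ⟨b', hb', hGb⟩ := hG.2 M
  exact ⟨fun x => b x + b' x, hb.add hb', fun x y hy =>
    (abs_sub _ _).trans (add_le_add (hFb x y hy) (hGb x y hy))⟩

theorem hasDerivAt_integral {F' : ℝ → ℝ → ℝ} (hF : LocallyDominated F)
    (hF' : LocallyDominated F') (hderiv : ∀ x y, HasDerivAt (F x ·) (F' x y) y) (y₀ : ℝ) :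
    HasDerivAt (fun y => ∫ x, F x y) (∫ x, F' x y₀) y₀ := by
  obtain ⟨b, hb, hF'b⟩ := hF'.2 (|y₀| + 1)
  have hball : ∀ y ∈ Metric.ball y₀ 1, |y| ≤ |y₀| + 1 := fun y hy => by
    have := abs_sub_abs_le_abs_sub y y₀
    rw [Metric.mem_ball, Real.dist_eq] at hy
    linarith
  exact (hasDerivAt_integral_of_dominated_loc_of_deriv_le (F := fun y x => F x y)
    (F' := fun y x => F' x y) (Metric.ball_mem_nhds y₀ one_pos)
    (Eventually.of_forall fun y => (hF.1 y).aestronglyMeasurable) (hF.integrable y₀)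
    (hF'.1 y₀).aestronglyMeasurable
    (Eventually.of_forall fun x y hy => hF'b x y (hball y hy)) hb
    (Eventually.of_forall fun x y _ => hderiv x y)).2

theorem integral_deriv_eq_zero {F' : ℝ → ℝ → ℝ} (hF : LocallyDominated F)
    (hF' : LocallyDominated F') (hderiv : ∀ x y, HasDerivAt (F x ·) (F' x y) y)
    (hzero : ∀ y, ∫ x, F x y = 0) (y : ℝ) : ∫ x, F' x y = 0 := by
  have h := hF.hasDerivAt_integral hF' hderiv y
  rw [funext hzero] at h
  exact h.unique (hasDerivAt_const y 0)

end LocallyDominated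

theorem PolyGrowth.locallyDominated_mul {r θ : ℝ → ℝ → ℝ} (hr : PolyGrowth r)
    (hθ : RapidDecay θ) : LocallyDominated fun x y => r x y * θ x y := by
  refine ⟨fun y => (hr.1 y).mul (hθ.1 y), fun M => ?_⟩
  obtain ⟨A, N, hA, hrb⟩ := hr.2 M
  obtain ⟨C, c, hc, hθb⟩ := hθ.2 M
  refine ⟨fun x => A * C * ((1 + |x|) ^ N * exp (-|x| ^ c)),
    (integrable_one_add_abs_pow_mul_exp_neg_abs_rpow N hc).const_mul _, fun x y hy => ?_⟩
  calc |r x y * θ x y| ≤ A * (1 + |x|) ^ N * (C * exp (-|x| ^ c)) := by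
        rw [abs_mul]
        exact mul_le_mul (hrb x y hy) (hθb x y hy) (abs_nonneg _) (by positivity)
    _ = A * C * ((1 + |x|) ^ N * exp (-|x| ^ c)) := by ring

theorem integral_eq_zero_of_eq_linear_combination {α : Type*} [MeasurableSpace α]
    {μ : Measure α} {f₀ f₁ f₂ f₃ g : α → ℝ} (hf₀ : Integrable f₀ μ) (hf₁ : Integrable f₁ μ)
    (hf₂ : Integrable f₂ μ) (hf₃ : Integrable f₃ μ) (h₀ : ∫ x, f₀ x ∂μ = 0)
    (h₁ : ∫ x, f₁ x ∂μ = 0) (h₂ : ∫ x, f₂ x ∂μ = 0) (h₃ : ∫ x, f₃ x ∂μ = 0) (a₀ a₁ a₂ a₃ : ℝ)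
    (hg : ∀ x, g x = a₀ * f₀ x + a₁ * f₁ x + a₂ * f₂ x + a₃ * f₃ x) : ∫ x, g x ∂μ = 0 := by
  simp only [hg]
  rw [integral_add (((hf₀.const_mul _).fun_add (hf₁.const_mul _)).fun_add (hf₂.const_mul _))
      (hf₃.const_mul _), integral_add ((hf₀.const_mul _).fun_add (hf₁.const_mul _))
      (hf₂.const_mul _), integral_add (hf₀.const_mul _) (hf₁.const_mul _)]
  simp [integral_const_mul, h₀, h₁, h₂, h₃]

theorem HasDerivAt.re {f : ℝ → ℂ} {f' : ℂ} {t : ℝ} (hf : HasDerivAt f f' t) :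
    HasDerivAt (fun s => (f s).re) f'.re t :=
  reCLM.hasFDerivAt.comp_hasDerivAt t hf

theorem HasDerivAt.im {f : ℝ → ℂ} {f' : ℂ} {t : ℝ} (hf : HasDerivAt f f' t) :
    HasDerivAt (fun s => (f s).im) f'.im t :=
  imCLM.hasFDerivAt.comp_hasDerivAt t hf

theorem hasDerivAt_comp_add_mul_I_fst {f f' : ℂ → ℂ} (hf : ∀ z, HasDerivAt f (f' z) z)
    (x y : ℝ) : HasDerivAt (fun s : ℝ => f (s + y * I)) (f' (x + y * I)) x := by
  have hin : HasDerivAt (fun z : ℂ => z + y * I) 1 x := (hasDerivAt_id _).add_const _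
  simpa using ((hf _).comp (x : ℂ) hin).comp_ofReal

theorem hasDerivAt_comp_add_mul_I_snd {f f' : ℂ → ℂ} (hf : ∀ z, HasDerivAt f (f' z) z)
    (x y : ℝ) : HasDerivAt (fun s : ℝ => f (x + s * I)) (I * f' (x + y * I)) y := by
  have hin : HasDerivAt (fun z : ℂ => x + z * I) I y := by
    simpa using ((hasDerivAt_id (y : ℂ)).mul_const I).const_add (x : ℂ)
  simpa [mul_comm] using ((hf _).comp (y : ℂ) hin).comp_ofReal

theorem re_I_mul_cube_sub (x y : ℝ) (lam : ℂ) :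
    (I * (x + y * I) ^ 3 - lam).re = y ^ 3 - 3 * x ^ 2 * y - lam.re := by
  simp only [mul_re, mul_im, sub_re, add_re, add_im, ofReal_re, ofReal_im, I_re, I_im,
    one_re, one_im, pow_succ, pow_zero]
  ring

theorem im_I_mul_cube_sub (x y : ℝ) (lam : ℂ) :
    (I * (x + y * I) ^ 3 - lam).im = x ^ 3 - 3 * x * y ^ 2 - lam.im := by
  simp only [mul_re, mul_im, sub_im, add_re, add_im, ofReal_re, ofReal_im, I_re, I_im,
    one_re, one_im, pow_succ, pow_zero]
  ring

noncomputable section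

def density (u : ℂ → ℂ) (x y : ℝ) : ℝ := ‖u (x + y * I)‖ ^ 2

def derivMulConj (u : ℂ → ℂ) (x y : ℝ) : ℂ := deriv u (x + y * I) * conj (u (x + y * I))

end

section SchrodingerEquation

variable {u V : ℂ → ℂ}

theorem hasDerivAt_density_fst (hu : Differentiable ℂ u) (x y : ℝ) :
    HasDerivAt (density u · y) (2 * (derivMulConj u x y).re) x := by
  refine (hasDerivAt_comp_add_mul_I_fst (fun z => (hu z).hasDerivAt) x y).norm_sq.congr_deriv ?_
  simp [derivMulConj, Complex.inner]

theorem hasDerivAt_density_snd (hu : Differentiable ℂ u) (x y : ℝ) :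
    HasDerivAt (density u x ·) (-2 * (derivMulConj u x y).im) y := by
  refine (hasDerivAt_comp_add_mul_I_snd (fun z => (hu z).hasDerivAt) x y).norm_sq.congr_deriv ?_
  simp only [derivMulConj, Complex.inner, mul_re, mul_im, I_re, I_im, conj_re, conj_im]
  ring

theorem hasDerivAt_derivMulConj_fst (hu : Differentiable ℂ u)
    (hu' : ∀ z, HasDerivAt (deriv u) (V z * u z) z) (x y : ℝ) :
    HasDerivAt (derivMulConj u · y) (V (x + y * I) * density u x y + density (deriv u) x y) x := by
  have hv := hasDerivAt_comp_add_mul_I_fst (fun z => (hu z).hasDerivAt) x y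
  have hw := hasDerivAt_comp_add_mul_I_fst hu' x y
  refine (hw.fun_mul hv.star).congr_deriv ?_
  simp only [density, ofReal_pow, ← mul_conj']
  simp only [starRingEnd_apply]
  ring

theorem hasDerivAt_derivMulConj_snd (hu : Differentiable ℂ u)
    (hu' : ∀ z, HasDerivAt (deriv u) (V z * u z) z) (x y : ℝ) :
    HasDerivAt (derivMulConj u x ·)
      (I * (V (x + y * I) * density u x y - density (deriv u) x y)) y := by
  have hv := hasDerivAt_comp_add_mul_I_snd (fun z => (hu z).hasDerivAt) x y
  have hw := hasDerivAt_comp_add_mul_I_snd hu' x y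
  refine (hw.fun_mul hv.star).congr_deriv ?_
  simp only [density, ofReal_pow, ← mul_conj']
  simp only [starRingEnd_apply, star_mul', show star I = -I from conj_I]
  ring

theorem hasDerivAt_im_derivMulConj_fst (hu : Differentiable ℂ u)
    (hu' : ∀ z, HasDerivAt (deriv u) (V z * u z) z) (x y : ℝ) :
    HasDerivAt (fun s => (derivMulConj u s y).im) ((V (x + y * I)).im * density u x y) x :=
  (hasDerivAt_derivMulConj_fst hu hu' x y).im.congr_deriv (by simp)

theorem hasDerivAt_re_derivMulConj_fst (hu : Differentiable ℂ u)
    (hu' : ∀ z, HasDerivAt (deriv u) (V z * u z) z) (x y : ℝ) :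
    HasDerivAt (fun s => (derivMulConj u s y).re)
      ((V (x + y * I)).re * density u x y + density (deriv u) x y) x :=
  (hasDerivAt_derivMulConj_fst hu hu' x y).re.congr_deriv (by simp)

theorem hasDerivAt_im_derivMulConj_snd (hu : Differentiable ℂ u)
    (hu' : ∀ z, HasDerivAt (deriv u) (V z * u z) z) (x y : ℝ) :
    HasDerivAt (fun s => (derivMulConj u x s).im)
      ((V (x + y * I)).re * density u x y - density (deriv u) x y) y :=
  (hasDerivAt_derivMulConj_snd hu hu' x y).im.congr_deriv (by simp)

end SchrodingerEquation

def DecaysHorizontally (u : ℂ → ℂ) : Prop :=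
  ∀ M : ℝ, 0 < M → ∃ C₁ > (0 : ℝ), ∃ C₂ > (0 : ℝ), ∀ x y : ℝ, |y| ≤ M →
    ‖u (x + y * I)‖ + ‖deriv u (x + y * I)‖ ≤ C₁ * exp (-|x| ^ C₂)

namespace DecaysHorizontally

variable {u : ℂ → ℂ}

theorem rapidDecay_sq_norm_add (hdecay : DecaysHorizontally u) (hu : Differentiable ℂ u) :
    RapidDecay fun x y => (‖u (x + y * I)‖ + ‖deriv u (x + y * I)‖) ^ 2 := by
  have := hu.continuous
  have := hu.deriv.continuous
  refine ⟨fun y => by fun_prop, fun M => ?_⟩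
  obtain ⟨C, -, c, hc, hb⟩ := hdecay (max M 1) (by positivity)
  refine ⟨C ^ 2, c, hc, fun x y hy => ?_⟩
  have hE : exp (-|x| ^ c) ≤ 1 := exp_le_one_iff.2 (neg_nonpos.2 (by positivity))
  rw [abs_of_nonneg (sq_nonneg _)]
  calc (‖u (x + y * I)‖ + ‖deriv u (x + y * I)‖) ^ 2 ≤ (C * exp (-|x| ^ c)) ^ 2 :=
        pow_le_pow_left₀ (by positivity) (hb x y (hy.trans (le_max_left _ _))) 2
    _ = C ^ 2 * exp (-|x| ^ c) * exp (-|x| ^ c) := by ring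
    _ ≤ C ^ 2 * exp (-|x| ^ c) := mul_le_of_le_one_right (by positivity) hE

theorem rapidDecay_density (hdecay : DecaysHorizontally u) (hu : Differentiable ℂ u) :
    RapidDecay (density u) := by
  have := hu.continuous
  refine (hdecay.rapidDecay_sq_norm_add hu).of_abs_le (fun y => by unfold density; fun_prop)
    fun x y => ?_
  rw [density, abs_of_nonneg (sq_nonneg _)]
  gcongr
  exact le_add_of_nonneg_right (norm_nonneg _)

theorem rapidDecay_density_deriv (hdecay : DecaysHorizontally u) (hu : Differentiable ℂ u) :
    RapidDecay (density (deriv u)) := by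
  have := hu.deriv.continuous
  refine (hdecay.rapidDecay_sq_norm_add hu).of_abs_le (fun y => by unfold density; fun_prop)
    fun x y => ?_
  rw [density, abs_of_nonneg (sq_nonneg _)]
  gcongr
  exact le_add_of_nonneg_left (norm_nonneg _)

theorem norm_derivMulConj_le (x y : ℝ) :
    ‖derivMulConj u x y‖ ≤ (‖u (x + y * I)‖ + ‖deriv u (x + y * I)‖) ^ 2 := by
  rw [derivMulConj, norm_mul, Complex.norm_conj]
  nlinarith [norm_nonneg (u (x + y * I)), norm_nonneg (deriv u (x + y * I))]

theorem rapidDecay_re_derivMulConj (hdecay : DecaysHorizontally u) (hu : Differentiable ℂ u) :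
    RapidDecay fun x y => (derivMulConj u x y).re := by
  have := hu.continuous
  have := hu.deriv.continuous
  exact (hdecay.rapidDecay_sq_norm_add hu).of_abs_le
    (fun y => by unfold derivMulConj; fun_prop)
    fun x y => (abs_re_le_norm _).trans (norm_derivMulConj_le x y)

theorem rapidDecay_im_derivMulConj (hdecay : DecaysHorizontally u) (hu : Differentiable ℂ u) :
    RapidDecay fun x y => (derivMulConj u x y).im := by
  have := hu.continuous
  have := hu.deriv.continuous
  exact (hdecay.rapidDecay_sq_norm_add hu).of_abs_le
    (fun y => by unfold derivMulConj; fun_prop)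
    fun x y => (abs_im_le_norm _).trans (norm_derivMulConj_le x y)

end DecaysHorizontally

section Moments

open MvPolynomial

variable {u : ℂ → ℂ} {lam : ℂ}

theorem integral_deriv_deriv_moment_eq_zero (hu : Differentiable ℂ u)
    (hu' : ∀ z, HasDerivAt (deriv u) ((I * z ^ 3 - lam) * u z) z)
    (hdecay : DecaysHorizontally u) (P : MvPolynomial (Fin 2) ℝ)
    (horth : ∀ y, ∫ x, eval ![x, y] P * density u x y = 0) (y : ℝ) :
    let F x := eval ![x, y] (pderiv 1 (pderiv 1 P)) * density u x y
      - 4 * eval ![x, y] (pderiv 1 P) * (derivMulConj u x y).im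
      - 2 * (y ^ 3 - 3 * x ^ 2 * y - lam.re) * eval ![x, y] P * density u x y
      + 2 * eval ![x, y] P * density (deriv u) x y
    Integrable F ∧ ∫ x, F x = 0 := by
  have hd := hdecay.rapidDecay_density hu
  have him := hdecay.rapidDecay_im_derivMulConj hu
  have hd' := hdecay.rapidDecay_density_deriv hu
  have hF₀ := (polyGrowth_eval P).locallyDominated_mul hd
  have hF₁ : LocallyDominated fun x y => eval ![x, y] (pderiv 1 P) * density u x y
      - 2 * eval ![x, y] P * (derivMulConj u x y).im :=
    ((polyGrowth_eval _).locallyDominated_mul hd).sub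
      (((PolyGrowth.const 2).mul (polyGrowth_eval P)).locallyDominated_mul him)
  have hF₂ : LocallyDominated fun x y => eval ![x, y] (pderiv 1 (pderiv 1 P)) * density u x y
      - 4 * eval ![x, y] (pderiv 1 P) * (derivMulConj u x y).im
      - 2 * (y ^ 3 - 3 * x ^ 2 * y - lam.re) * eval ![x, y] P * density u x y
      + 2 * eval ![x, y] P * density (deriv u) x y :=
    ((((polyGrowth_eval _).locallyDominated_mul hd).sub
      (((PolyGrowth.const 4).mul (polyGrowth_eval _)).locallyDominated_mul him)).sub
      ((((PolyGrowth.const 2).mul (polyGrowth_re_I_mul_cube_sub lam.re)).mul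
        (polyGrowth_eval P)).locallyDominated_mul hd)).add
      (((PolyGrowth.const 2).mul (polyGrowth_eval P)).locallyDominated_mul hd')
  have h₁ := hF₀.integral_deriv_eq_zero hF₁ (fun x y =>
    ((hasDerivAt_eval_snd P x y).fun_mul (hasDerivAt_density_snd hu x y)).congr_deriv
      (by ring)) horth
  exact ⟨hF₂.integrable y, hF₁.integral_deriv_eq_zero hF₂ (fun x y =>
    (((hasDerivAt_eval_snd _ x y).fun_mul (hasDerivAt_density_snd hu x y)).fun_sub
      (((hasDerivAt_eval_snd P x y).const_mul 2).fun_mul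
        (hasDerivAt_im_derivMulConj_snd hu hu' x y))).congr_deriv
      (by rw [re_I_mul_cube_sub]; ring)) h₁ y⟩

theorem integral_primitive_mul_im_derivMulConj_deriv_eq_zero (hu : Differentiable ℂ u)
    (hu' : ∀ z, HasDerivAt (deriv u) ((I * z ^ 3 - lam) * u z) z)
    (hdecay : DecaysHorizontally u) (P : MvPolynomial (Fin 2) ℝ) (y : ℝ) :
    let F x := eval ![x, y] P * (derivMulConj u x y).im
      + (x ^ 3 - 3 * x * y ^ 2 - lam.im) * (∫ t in (0 : ℝ)..x, eval ![t, y] P) * density u x y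
    Integrable F ∧ ∫ x, F x = 0 := by
  have hd := hdecay.rapidDecay_density hu
  have him := hdecay.rapidDecay_im_derivMulConj hu
  have hQ := (polyGrowth_eval P).primitive
  have hF' : Integrable fun x => eval ![x, y] P * (derivMulConj u x y).im
      + (x ^ 3 - 3 * x * y ^ 2 - lam.im) * (∫ t in (0 : ℝ)..x, eval ![t, y] P) * density u x y :=
    (((polyGrowth_eval P).locallyDominated_mul him).add
      (((polyGrowth_im_I_mul_cube_sub lam.im).mul hQ).locallyDominated_mul hd)).integrable y
  refine ⟨hF', integral_eq_zero_of_hasDerivAt_of_integrable (fun x =>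
    ((((polyGrowth_eval P).1 y).integral_hasStrictDerivAt 0 x).hasDerivAt.fun_mul
      (hasDerivAt_im_derivMulConj_fst hu hu' x y)).congr_deriv
      (by rw [im_I_mul_cube_sub]; ring)) hF'
    ((hQ.locallyDominated_mul him).integrable y)⟩

theorem integral_re_derivMulConj_deriv_eq_zero (hu : Differentiable ℂ u)
    (hu' : ∀ z, HasDerivAt (deriv u) ((I * z ^ 3 - lam) * u z) z)
    (hdecay : DecaysHorizontally u) (P : MvPolynomial (Fin 2) ℝ) (y : ℝ) :
    let F x := 2 * (y ^ 3 - 3 * x ^ 2 * y - lam.re) * eval ![x, y] P * density u x y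
      + 2 * eval ![x, y] P * density (deriv u) x y
      - eval ![x, y] (pderiv 0 (pderiv 0 P)) * density u x y
    Integrable F ∧ ∫ x, F x = 0 := by
  have hd := hdecay.rapidDecay_density hu
  have hd' := hdecay.rapidDecay_density_deriv hu
  have hre := hdecay.rapidDecay_re_derivMulConj hu
  have hF' : Integrable fun x => 2 * (y ^ 3 - 3 * x ^ 2 * y - lam.re) * eval ![x, y] P
      * density u x y + 2 * eval ![x, y] P * density (deriv u) x y
      - eval ![x, y] (pderiv 0 (pderiv 0 P)) * density u x y :=
    (((((PolyGrowth.const 2).mul (polyGrowth_re_I_mul_cube_sub lam.re)).mul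
      (polyGrowth_eval P)).locallyDominated_mul hd).add
      (((PolyGrowth.const 2).mul (polyGrowth_eval P)).locallyDominated_mul hd')).sub
      ((polyGrowth_eval _).locallyDominated_mul hd) |>.integrable y
  have hF : Integrable fun x => 2 * eval ![x, y] P * (derivMulConj u x y).re
      - eval ![x, y] (pderiv 0 P) * density u x y :=
    ((((PolyGrowth.const 2).mul (polyGrowth_eval P)).locallyDominated_mul hre).sub
      ((polyGrowth_eval _).locallyDominated_mul hd)).integrable y
  refine ⟨hF', integral_eq_zero_of_hasDerivAt_of_integrable (fun x =>
    ((((hasDerivAt_eval_fst P x y).const_mul 2).fun_mul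
      (hasDerivAt_re_derivMulConj_fst hu hu' x y)).fun_sub
      ((hasDerivAt_eval_fst _ x y).fun_mul (hasDerivAt_density_fst hu x y))).congr_deriv
      (by rw [re_I_mul_cube_sub]; ring)) hF' hF⟩

theorem integral_laplacianOperation_mul_density_eq_zero (hu : Differentiable ℂ u)
    (hu' : ∀ z, HasDerivAt (deriv u) ((I * z ^ 3 - lam) * u z) z)
    (hdecay : DecaysHorizontally u) (P : MvPolynomial (Fin 2) ℝ)
    (horth : ∀ y, ∫ x, eval ![x, y] P * density u x y = 0) (y : ℝ) :
    ∫ x, (eval ![x, y] (pderiv 0 (pderiv 0 P)) + eval ![x, y] (pderiv 1 (pderiv 1 P))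
      + 12 * x ^ 2 * y * eval ![x, y] P
      + 4 * (x ^ 3 - 3 * x * y ^ 2 - lam.im) * ∫ t in (0 : ℝ)..x, eval ![t, y] (pderiv 1 P))
      * density u x y = 0 := by
  have hd := hdecay.rapidDecay_density hu
  obtain ⟨i₁, h₁⟩ := integral_deriv_deriv_moment_eq_zero hu hu' hdecay P horth y
  obtain ⟨i₂, h₂⟩ :=
    integral_primitive_mul_im_derivMulConj_deriv_eq_zero hu hu' hdecay (pderiv 1 P) y
  obtain ⟨i₃, h₃⟩ := integral_re_derivMulConj_deriv_eq_zero hu hu' hdecay P y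
  exact integral_eq_zero_of_eq_linear_combination
    (((polyGrowth_eval P).locallyDominated_mul hd).integrable y) i₁ i₂ i₃ (horth y) h₁ h₂ h₃
    (4 * (y ^ 3 - lam.re)) 1 4 (-1) fun x => by ring

end Moments

theorem orthogonality_closed_under_laplacian_operation_general
    (lam : ℂ) (u : ℂ → ℂ)
    (hu_entire : Differentiable ℂ u)
    (hode : ∀ w : ℂ, iteratedDeriv 2 u w = (Complex.I * w ^ 3 - lam) * u w)
    (hdecay : ∀ M : ℝ, 0 < M → ∃ C₁ > (0 : ℝ), ∃ C₂ > (0 : ℝ), ∀ x y : ℝ, |y| ≤ M →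
      ‖u (x + y * Complex.I)‖ + ‖deriv u (x + y * Complex.I)‖
        ≤ C₁ * Real.exp (-(|x| ^ C₂)))
    (p : ℝ → ℝ → ℝ)
    (hp : ∃ P : MvPolynomial (Fin 2) ℝ, ∀ x y : ℝ,
      p x y = MvPolynomial.eval ![x, y] P)
    (horth : ∀ y : ℝ,
      ∫ x : ℝ, p x y * ‖u (x + y * Complex.I)‖ ^ 2 = 0) :
    ∀ y : ℝ,
      ∫ x : ℝ,
        (deriv (deriv (fun s : ℝ => p s y)) x
          + deriv (deriv (fun s : ℝ => p x s)) y
          + 12 * x ^ 2 * y * p x y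
          + 4 * (x ^ 3 - 3 * x * y ^ 2 - lam.im)
            * ∫ t in (0 : ℝ)..x, deriv (fun s : ℝ => p t s) y)
        * ‖u (x + y * Complex.I)‖ ^ 2 = 0 := by
  obtain ⟨P, hP⟩ := hp
  obtain rfl : p = fun x y => MvPolynomial.eval ![x, y] P := funext₂ hP
  have hu' (z : ℂ) : HasDerivAt (deriv u) ((I * z ^ 3 - lam) * u z) z := by
    simpa [← hode z, iteratedDeriv_succ] using (hu_entire.deriv z).hasDerivAt
  intro y
  simp only [MvPolynomial.deriv_eval_fst, MvPolynomial.deriv_eval_snd]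
  exact integral_laplacianOperation_mul_density_eq_zero hu_entire hu' hdecay P horth y

/-- Let `u` be an eigenfunction of the cubic PT-symmetric oscillator
`-u'' - (iz)³u = lam·u` with eigenvalue `lam = α + iβ`.  If `p(x,y)` is a polynomial
in two real variables with `∫_ℝ p(x,y)·|u(x+iy)|² dx = 0` for every `y`, then the
polynomial
`q(x,y) = ∂²p/∂x² + ∂²p/∂y² + 12x²y·p(x,y) + 4(x³ - 3xy² - β)·∫₀ˣ (∂p/∂y)(t,y) dt`
also satisfies `∫_ℝ q(x,y)·|u(x+iy)|² dx = 0` for every `y`. -/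
theorem orthogonality_closed_under_laplacian_operation
    (lam : ℂ) (u : ℂ → ℂ)
    (hu_entire : Differentiable ℂ u)
    (hu_ne : u ≠ 0)
    (hode : ∀ w : ℂ, iteratedDeriv 2 u w = (Complex.I * w ^ 3 - lam) * u w)
    (hdecay : ∀ M : ℝ, 0 < M → ∃ C₁ > (0 : ℝ), ∃ C₂ > (0 : ℝ), ∀ x y : ℝ, |y| ≤ M →
      ‖u (x + y * Complex.I)‖ + ‖deriv u (x + y * Complex.I)‖
        ≤ C₁ * Real.exp (-(|x| ^ C₂)))
    (p : ℝ → ℝ → ℝ)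
    (hp : ∃ P : MvPolynomial (Fin 2) ℝ, ∀ x y : ℝ,
      p x y = MvPolynomial.eval ![x, y] P)
    (horth : ∀ y : ℝ,
      ∫ x : ℝ, p x y * ‖u (x + y * Complex.I)‖ ^ 2 = 0) :
    ∀ y : ℝ,
      ∫ x : ℝ,
        (deriv (deriv (fun s : ℝ => p s y)) x
          + deriv (deriv (fun s : ℝ => p x s)) y
          + 12 * x ^ 2 * y * p x y
          + 4 * (x ^ 3 - 3 * x * y ^ 2 - lam.im)
            * ∫ t in (0 : ℝ)..x, deriv (fun s : ℝ => p t s) y)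
        * ‖u (x + y * Complex.I)‖ ^ 2 = 0 :=
  orthogonality_closed_under_laplacian_operation_general lam u hu_entire hode hdecay p hp horth
end

section
/- The function F : ℝ → ℝ defined by F(y) = ∫_ℝ |u(x+iy)|² dx is a convex function of y. -/
open Complex Real ComplexConjugate MeasureTheory

open Set

/-!
Since `u` is entire, `|u|²` is subharmonic: `|u z|²` is at most its average over any circle
around `z`. Averaging over horizontal translates (Fubini, dominated by the decay of `u`), the
function `z ↦ F (Im z)` inherits this sub-mean property, i.e.
`F y ≤ (2π)⁻¹ ∫₀^{2π} F (y + r sin θ) dθ`. For a continuous function of one real variable this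
forces the maximum principle on intervals, and applying it to `F` minus a secant line gives
convexity.
-/

lemma integrable_exp_neg_abs_rpow {p : ℝ} (hp : 0 < p) :
    Integrable (fun x : ℝ => exp (-|x| ^ p)) := by
  refine Integrable.of_integral_ne_zero ?_
  rw [integral_comp_abs (f := fun x => exp (-x ^ p)), integral_exp_neg_rpow hp]
  have := Real.Gamma_pos_of_pos (show 0 < 1 / p + 1 by positivity)
  positivity

lemma norm_circleAverage_le {E : Type*} [NormedAddCommGroup E] [NormedSpace ℝ E]
    (f : ℂ → E) (c : ℂ) (R : ℝ) :
    ‖circleAverage f c R‖ ≤ circleAverage (fun z => ‖f z‖) c R := by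
  rw [circleAverage_def, circleAverage_def, norm_smul, smul_eq_mul,
    Real.norm_of_nonneg (by positivity)]
  gcongr
  exact intervalIntegral.norm_integral_le_integral_norm two_pi_pos.le

lemma circleAverage_comp_im (φ : ℝ → ℝ) (c : ℂ) (R : ℝ) :
    circleAverage (fun z => φ z.im) c R =
      (2 * π)⁻¹ * ∫ θ in 0..2 * π, φ (c.im + R * Real.sin θ) := by
  simp [circleAverage_def, circleMap]

lemma circleAverage_affine_im (a b : ℝ) (c : ℂ) (R : ℝ) :
    circleAverage (fun z => a + b * z.im) c R = a + b * c.im := by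
  have hsplit : (fun θ => a + b * (c.im + R * Real.sin θ)) =
      fun θ => (a + b * c.im) + b * R * Real.sin θ := by
    ext θ; ring
  rw [circleAverage_comp_im (fun t => a + b * t), hsplit, intervalIntegral.integral_add
    intervalIntegrable_const (Real.continuous_sin.intervalIntegrable _ _ |>.const_mul _)]
  simp [integral_sin]
  field_simp

lemma circleMap_ofReal_add (x : ℝ) (c : ℂ) (r θ : ℝ) :
    circleMap (x + c) r θ = x + circleMap c r θ := by
  simp only [circleMap, add_assoc]

lemma integral_ofReal_add_eq_integral_ofReal_add_im_mul_I (v : ℂ → ℝ) (c : ℂ) :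
    ∫ x : ℝ, v (x + c) = ∫ x : ℝ, v (x + c.im * I) := by
  rw [← integral_add_right_eq_self (fun x : ℝ => v (x + c.im * I)) c.re]
  simp only [ofReal_add, add_assoc, re_add_im]

def SubmeanOnCircles (v : ℂ → ℝ) : Prop :=
  ∀ (z : ℂ) (r : ℝ), 0 < r → v z ≤ circleAverage v z r

theorem submeanOnCircles_norm_pow {u : ℂ → ℂ} (hu : Differentiable ℂ u) (n : ℕ) :
    SubmeanOnCircles (fun z => ‖u z‖ ^ n) := by
  intro z r _
  have hmean : circleAverage (fun w => u w ^ n) z r = u z ^ n :=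
    (hu.pow n).diffContOnCl.circleAverage
  calc ‖u z‖ ^ n = ‖circleAverage (fun w => u w ^ n) z r‖ := by rw [hmean, norm_pow]
    _ ≤ circleAverage (fun w => ‖u w‖ ^ n) z r := by
      simpa only [norm_pow] using norm_circleAverage_le (fun w => u w ^ n) z r

theorem SubmeanOnCircles.sub_affine_im {F : ℝ → ℝ} (hF : Continuous F)
    (hsub : SubmeanOnCircles (fun z => F z.im)) (a b : ℝ) :
    SubmeanOnCircles (fun z => F z.im - (a + b * z.im)) := by
  intro z r hr
  show F z.im - (a + b * z.im) ≤ _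
  have hint : ∀ g : ℝ → ℝ, Continuous g → CircleIntegrable (fun z => g z.im) z r :=
    fun g hg => (hg.comp continuous_im).continuousOn.circleIntegrable hr.le
  rw [circleAverage_fun_sub (f₁ := fun z => F z.im) (f₂ := fun z => a + b * z.im) (hint F hF)
    (hint (fun t => a + b * t) (by fun_prop)), circleAverage_affine_im]
  linarith [hsub z r hr]

theorem SubmeanOnCircles.nonpos_on_Icc {φ : ℝ → ℝ} (hφ : Continuous φ)
    (hsub : SubmeanOnCircles (fun z => φ z.im)) {p q : ℝ} (hp : φ p ≤ 0) (hq : φ q ≤ 0) :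
    ∀ t ∈ Icc p q, φ t ≤ 0 := by
  by_contra! ⟨t, ht, hpos⟩
  obtain ⟨t₁, ht₁, hmax⟩ := isCompact_Icc.exists_isMaxOn ⟨t, ht⟩ hφ.continuousOn
  -- On the circle of radius `r` around the leftmost maximiser `t₀`, the bottom point `t₀ - r`
  -- has a strictly smaller value, so the sub-mean inequality fails at `t₀`.
  obtain ⟨t₀, ⟨ht₀, hφt₀⟩, hleast⟩ :=
    (isCompact_Icc.inter_right (isClosed_singleton.preimage hφ)).exists_isLeast
      (⟨t₁, ht₁, rfl⟩ : (Icc p q ∩ φ ⁻¹' {φ t₁}).Nonempty)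
  have hm : 0 < φ t₁ := hpos.trans_le (hmax ht)
  simp only [mem_preimage, mem_singleton_iff] at hφt₀
  have hpt₀ : p < t₀ := ht₀.1.lt_of_ne (by rintro rfl; linarith)
  have ht₀q : t₀ < q := ht₀.2.lt_of_ne (by rintro rfl; linarith)
  set r := min (t₀ - p) (q - t₀)
  have hr : 0 < r := lt_min (by linarith) (by linarith)
  have hcircle : ∀ θ, t₀ + r * Real.sin θ ∈ Icc p q := fun θ => by
    constructor <;> nlinarith [Real.neg_one_le_sin θ, Real.sin_le_one θ,
      min_le_left (t₀ - p) (q - t₀), min_le_right (t₀ - p) (q - t₀)]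
  have hsin : Real.sin (3 * π / 2) = -1 := by
    rw [show 3 * π / 2 = π / 2 + π by ring, Real.sin_add_pi, Real.sin_pi_div_two]
  have hbottom : φ (t₀ + r * Real.sin (3 * π / 2)) < φ t₁ := by
    have hmem := hcircle (3 * π / 2)
    refine (hmax hmem).lt_of_ne fun heq => ?_
    have := hleast ⟨hmem, heq⟩
    rw [hsin] at this
    linarith
  have hlt : ∫ θ in 0..2 * π, φ (t₀ + r * Real.sin θ) < ∫ _ in 0..2 * π, φ t₁ := by
    refine intervalIntegral.integral_lt_integral_of_continuousOn_of_le_of_exists_lt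
      two_pi_pos (by fun_prop) continuousOn_const (fun θ _ => hmax (hcircle θ))
      ⟨3 * π / 2, ⟨by positivity, by linarith [pi_pos]⟩, hbottom⟩
  have hmean := hsub (t₀ * I) r hr
  rw [circleAverage_comp_im] at hmean
  simp only [mul_im, ofReal_re, I_im, mul_one, ofReal_im, I_re, mul_zero, add_zero,
    intervalIntegral.integral_const, smul_eq_mul, sub_zero] at hmean hlt
  rw [hφt₀] at hmean
  have : (2 * π)⁻¹ * ∫ θ in 0..2 * π, φ (t₀ + r * Real.sin θ) < φ t₁ := by
    rw [inv_mul_lt_iff₀ two_pi_pos]; exact hlt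
  linarith

theorem convexOn_univ_of_submeanOnCircles_comp_im {F : ℝ → ℝ} (hF : Continuous F)
    (hsub : SubmeanOnCircles (fun z => F z.im)) : ConvexOn ℝ univ F := by
  refine convexOn_of_slope_mono_adjacent convex_univ fun {x y z} _ _ hxy hyz => ?_
  set s := (F z - F x) / (z - x)
  have hs : s * (z - x) = F z - F x := div_mul_cancel₀ _ (by linarith)
  have hsecant := (hsub.sub_affine_im hF (F x - s * x) s).nonpos_on_Icc
    (φ := fun t => F t - (F x - s * x + s * t)) (by fun_prop) (by simp) (by linarith) y
    ⟨hxy.le, hyz.le⟩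
  rw [div_le_div_iff₀ (by linarith) (by linarith)]
  nlinarith [mul_le_mul_of_nonneg_left hsecant (by linarith : (0 : ℝ) ≤ z - x)]

def HasIntegrableBoundOnStrips (v : ℂ → ℝ) : Prop :=
  ∀ M : ℝ, ∃ g : ℝ → ℝ, Integrable g ∧ ∀ x y : ℝ, |y| ≤ M → ‖v (x + y * I)‖ ≤ g x

lemma hasIntegrableBoundOnStrips_norm_sq {u : ℂ → ℂ}
    (hdecay : ∀ M : ℝ, 0 < M → ∃ C₁ > (0 : ℝ), ∃ C₂ > (0 : ℝ), ∀ x y : ℝ, |y| ≤ M →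
      ‖u (x + y * I)‖ ≤ C₁ * exp (-(|x| ^ C₂))) :
    HasIntegrableBoundOnStrips (fun z => ‖u z‖ ^ 2) := by
  intro M
  obtain ⟨C₁, hC₁, C₂, hC₂, hu⟩ := hdecay (max M 1) (by positivity)
  refine ⟨fun x => C₁ * (C₁ * exp (-|x| ^ C₂)),
    ((integrable_exp_neg_abs_rpow hC₂).const_mul _).const_mul _, fun x y hy => ?_⟩
  have hux := hu x y (hy.trans (le_max_left _ _))
  have hbound : C₁ * exp (-|x| ^ C₂) ≤ C₁ :=
    mul_le_of_le_one_right hC₁.le (exp_le_one_iff.2 (neg_nonpos.2 (by positivity)))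
  rw [norm_pow, norm_norm, sq]
  exact mul_le_mul (hux.trans hbound) hux (norm_nonneg _) hC₁.le

namespace HasIntegrableBoundOnStrips

variable {v : ℂ → ℝ}

lemma exists_bound_add (hv : HasIntegrableBoundOnStrips v) (M : ℝ) :
    ∃ g : ℝ → ℝ, Integrable g ∧
      ∀ (x : ℝ) (w : ℂ), |w.im| ≤ M → ‖v (x + w)‖ ≤ g (x + w.re) := by
  obtain ⟨g, hg, hbound⟩ := hv M
  refine ⟨g, hg, fun x w hw => ?_⟩
  convert hbound (x + w.re) w.im hw using 3
  push_cast
  rw [add_assoc, re_add_im]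

lemma integrable_comp_add (hv : HasIntegrableBoundOnStrips v) (hvc : Continuous v) (c : ℂ) :
    Integrable (fun x : ℝ => v (x + c)) := by
  obtain ⟨g, hg, hbound⟩ := hv.exists_bound_add |c.im|
  exact (hg.comp_add_right c.re).mono' (by fun_prop) (.of_forall fun x => hbound x c le_rfl)

lemma integrable_uncurry_add_circleMap (hv : HasIntegrableBoundOnStrips v) (hvc : Continuous v)
    (c : ℂ) (r : ℝ) :
    Integrable (Function.uncurry fun θ (x : ℝ) => v (x + circleMap c r θ))
      ((volume.restrict (uIoc 0 (2 * π))).prod volume) := by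
  obtain ⟨g, hg, hbound⟩ := hv.exists_bound_add (|c.im| + |r|)
  have hbound_circle : ∀ θ x : ℝ, ‖v (x + circleMap c r θ)‖ ≤ g (x + (circleMap c r θ).re) := by
    intro θ x
    refine hbound x _ ?_
    calc |(circleMap c r θ).im| = |c.im + r * Real.sin θ| := by simp [circleMap]
      _ ≤ |c.im| + |r| * |Real.sin θ| := by rw [← abs_mul]; exact abs_add_le _ _
      _ ≤ |c.im| + |r| := by
        gcongr; exact mul_le_of_le_one_right (abs_nonneg r) (abs_sin_le_one θ)
  have hcont : Continuous (Function.uncurry fun θ (x : ℝ) => v (x + circleMap c r θ)) := by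
    fun_prop
  have : IsFiniteMeasure (volume.restrict (uIoc 0 (2 * π))) := by
    rw [uIoc_of_le two_pi_pos.le]; infer_instance
  rw [integrable_prod_iff hcont.aestronglyMeasurable]
  refine ⟨.of_forall fun θ => (hg.comp_add_right _).mono' (by fun_prop)
    (.of_forall (hbound_circle θ)), ?_⟩
  refine (integrable_const (∫ x, g x)).mono'
    hcont.norm.aestronglyMeasurable.integral_prod_right' (.of_forall fun θ => ?_)
  rw [norm_of_nonneg (integral_nonneg fun _ => norm_nonneg _),
    ← integral_add_right_eq_self g (circleMap c r θ).re]
  exact integral_mono_of_nonneg (.of_forall fun _ => norm_nonneg _)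
    (hg.comp_add_right _) (.of_forall (hbound_circle θ))

lemma continuous_integral (hv : HasIntegrableBoundOnStrips v) (hvc : Continuous v) :
    Continuous fun y : ℝ => ∫ x : ℝ, v (x + y * I) := by
  refine continuous_iff_continuousAt.2 fun y₀ => ?_
  obtain ⟨g, hg, hbound⟩ := hv (|y₀| + 1)
  refine continuousAt_of_dominated (.of_forall fun y => by fun_prop) ?_ hg
    (.of_forall fun x => by fun_prop)
  filter_upwards [Metric.ball_mem_nhds y₀ one_pos] with y hy
  rw [Metric.mem_ball, Real.dist_eq] at hy
  exact .of_forall fun x => hbound x y (by linarith [abs_sub_abs_le_abs_sub y y₀])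

end HasIntegrableBoundOnStrips

theorem SubmeanOnCircles.integral_ofReal_add {v : ℂ → ℝ} (hv : SubmeanOnCircles v)
    (hvc : Continuous v) (hbd : HasIntegrableBoundOnStrips v) :
    SubmeanOnCircles (fun c => ∫ x : ℝ, v (x + c)) := by
  intro c r hr
  have hint := hbd.integrable_uncurry_add_circleMap hvc c r
  have hswap := intervalIntegral_integral_swap hint
  have hmean_int : Integrable (fun x : ℝ => circleAverage v (x + c) r) := by
    simp only [circleAverage_def, circleMap_ofReal_add, smul_eq_mul,
      intervalIntegral.integral_of_le two_pi_pos.le, ← uIoc_of_le two_pi_pos.le]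
    exact hint.integral_prod_right.const_mul _
  calc ∫ x : ℝ, v (x + c) ≤ ∫ x : ℝ, circleAverage v (x + c) r :=
        integral_mono (hbd.integrable_comp_add hvc c) hmean_int fun x => hv _ r hr
    _ = circleAverage (fun c => ∫ x : ℝ, v (x + c)) c r := by
        simp only [circleAverage_def, circleMap_ofReal_add, smul_eq_mul, integral_const_mul]
        rw [hswap]

theorem integral_abs_u_sq_convex_general
    (u : ℂ → ℂ)
    (hu_entire : Differentiable ℂ u)
    (hdecay : ∀ M : ℝ, 0 < M → ∃ C₁ > (0 : ℝ), ∃ C₂ > (0 : ℝ), ∀ x y : ℝ, |y| ≤ M →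
      ‖u (x + y * Complex.I)‖ + ‖deriv u (x + y * Complex.I)‖
        ≤ C₁ * Real.exp (-(|x| ^ C₂))) :
    ConvexOn ℝ Set.univ
      (fun y : ℝ => ∫ x : ℝ, ‖u (x + y * Complex.I)‖ ^ 2) := by
  have hbd : HasIntegrableBoundOnStrips (fun z => ‖u z‖ ^ 2) := by
    refine hasIntegrableBoundOnStrips_norm_sq fun M hM => ?_
    obtain ⟨C₁, hC₁, C₂, hC₂, hu⟩ := hdecay M hM
    exact ⟨C₁, hC₁, C₂, hC₂, fun x y hy =>
      (le_add_of_nonneg_right (norm_nonneg _)).trans (hu x y hy)⟩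
  have hcont : Continuous fun z => ‖u z‖ ^ 2 := hu_entire.continuous.norm.pow 2
  have hsub := (submeanOnCircles_norm_pow hu_entire 2).integral_ofReal_add hcont hbd
  refine convexOn_univ_of_submeanOnCircles_comp_im (hbd.continuous_integral hcont) ?_
  convert hsub using 2 with c
  exact (integral_ofReal_add_eq_integral_ofReal_add_im_mul_I (‖u ·‖ ^ 2) c).symm

/-- Let `u` be an eigenfunction of the cubic PT-symmetric oscillator
`-u'' - (iz)³u = lam·u` with eigenvalue `lam`.  Then
`F(y) = ∫_ℝ |u(x+iy)|² dx` is a convex function of `y`. -/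
theorem integral_abs_u_sq_convex
    (lam : ℂ) (u : ℂ → ℂ)
    (hu_entire : Differentiable ℂ u)
    (hu_ne : u ≠ 0)
    (hode : ∀ w : ℂ, iteratedDeriv 2 u w = (Complex.I * w ^ 3 - lam) * u w)
    (hdecay : ∀ M : ℝ, 0 < M → ∃ C₁ > (0 : ℝ), ∃ C₂ > (0 : ℝ), ∀ x y : ℝ, |y| ≤ M →
      ‖u (x + y * Complex.I)‖ + ‖deriv u (x + y * Complex.I)‖
        ≤ C₁ * Real.exp (-(|x| ^ C₂))) :
    ConvexOn ℝ Set.univ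
      (fun y : ℝ => ∫ x : ℝ, ‖u (x + y * Complex.I)‖ ^ 2) :=
  integral_abs_u_sq_convex_general u hu_entire hdecay
end
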